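/- Let G be a group generated by a set S of involutions, and let (P_s)_{s∈S} be a family of subsets of G satisfying: (a) e ∈ P_s for all s; (b) P_s ∩ sP_s = ∅ for all s; (c) if s,s' ∈ S, g ∈ G with g ∈ P_s and gs' ∉ P_s, then s = g s' g⁻¹. Then (G,S) is a Coxeter system and P_s = {g : ℓ(sg) > ℓ(g)} for every s ∈ S. -/

import Mathlib

namespace Stmt14

structure Cfg (G : Type*) [Group G] where
  S : Set G
  P : S → Set G
  invol : ∀ s ∈ S, s ≠ 1 ∧ s * s = 1
  gen : Subgroup.closure S = ⊤
  ha : ∀ s : S, (1 : G) ∈ P s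
  hb : ∀ s : S, P s ∩ (fun g => (s : G) * g) '' (P s) = ∅
  hc : ∀ s s' : S, ∀ g : G, g ∈ P s → g * (s' : G) ∉ P s →
      (s : G) = g * (s' : G) * g⁻¹

namespace Cfg

variable {G : Type*} [Group G] (C : Cfg G)

/-- Product of a word over the generating set. -/
def wp (ω : List C.S) : G := (ω.map Subtype.val).prod

@[simp] lemma wp_nil : C.wp [] = 1 := rfl

lemma wp_cons (s : C.S) (ω : List C.S) : C.wp (s :: ω) = (s : G) * C.wp ω := by
  simp [wp]

lemma wp_append (ω ψ : List C.S) : C.wp (ω ++ ψ) = C.wp ω * C.wp ψ := by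
  simp [wp]

@[simp] lemma wp_singleton (s : C.S) : C.wp [s] = (s : G) := by simp [wp]

lemma sq (s : C.S) : (s : G) * (s : G) = 1 := (C.invol s s.2).2

lemma s_ne_one (s : C.S) : (s : G) ≠ 1 := (C.invol s s.2).1

lemma s_inv (s : C.S) : (s : G)⁻¹ = (s : G) := by
  rw [inv_eq_iff_mul_eq_one, C.sq]

lemma s_cancel (s : C.S) (g : G) : (s : G) * ((s : G) * g) = g := by
  rw [← mul_assoc, C.sq, one_mul]

lemma wp_reverse (ω : List C.S) : C.wp ω.reverse = (C.wp ω)⁻¹ := by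
  induction ω with
  | nil => simp
  | cons a ω ih =>
    rw [List.reverse_cons, C.wp_append, ih, C.wp_cons a ω, mul_inv_rev]
    simp [C.s_inv]

lemma exists_word (g : G) : ∃ ω : List C.S, C.wp ω = g := by
  have hg : g ∈ Subgroup.closure C.S := by rw [C.gen]; trivial
  induction hg using Subgroup.closure_induction with
  | mem x hx => exact ⟨[⟨x, hx⟩], by simp⟩
  | one => exact ⟨[], rfl⟩
  | mul x y _ _ hx hy =>
    obtain ⟨ω, rfl⟩ := hx
    obtain ⟨ψ, rfl⟩ := hy
    exact ⟨ω ++ ψ, C.wp_append ω ψ⟩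
  | inv x _ hx =>
    obtain ⟨ω, rfl⟩ := hx
    exact ⟨ω.reverse, C.wp_reverse ω⟩

/-- Word length of `g` with respect to `C.S`. -/
noncomputable def lg (g : G) : ℕ := sInf {n | ∃ ω : List C.S, ω.length = n ∧ C.wp ω = g}

lemma lg_set_nonempty (g : G) :
    {n | ∃ ω : List C.S, ω.length = n ∧ C.wp ω = g}.Nonempty := by
  obtain ⟨ω, hω⟩ := C.exists_word g
  exact ⟨ω.length, ω, rfl, hω⟩

lemma exists_reduced_word (g : G) : ∃ ω : List C.S, ω.length = C.lg g ∧ C.wp ω = g :=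
  Nat.sInf_mem (C.lg_set_nonempty g)

lemma lg_le {g : G} {ω : List C.S} (h : C.wp ω = g) : C.lg g ≤ ω.length :=
  Nat.sInf_le ⟨ω, rfl, h⟩

@[simp] lemma lg_one : C.lg 1 = 0 :=
  Nat.le_zero.mp (C.lg_le (g := 1) (ω := []) rfl)

lemma lg_eq_zero_iff {g : G} : C.lg g = 0 ↔ g = 1 := by
  constructor
  · intro h
    obtain ⟨ω, hlen, hω⟩ := C.exists_reduced_word g
    rw [h] at hlen
    rw [← hω, List.length_eq_zero_iff.mp hlen, wp_nil]
  · rintro rfl; exact C.lg_one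

lemma lg_smul_le (s : C.S) (g : G) : C.lg ((s : G) * g) ≤ C.lg g + 1 := by
  obtain ⟨ω, hlen, hω⟩ := C.exists_reduced_word g
  have : C.wp (s :: ω) = (s : G) * g := by rw [C.wp_cons, hω]
  simpa [hlen] using C.lg_le this

lemma lg_smul_ge (s : C.S) (g : G) : C.lg g ≤ C.lg ((s : G) * g) + 1 := by
  have := C.lg_smul_le s ((s : G) * g)
  rwa [C.s_cancel] at this


section PFacts

lemma not_both {s : C.S} {g : G} (h1 : g ∈ C.P s) (h2 : (s : G) * g ∈ C.P s) : False := by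
  have : (s : G) * g ∈ C.P s ∩ (fun x => (s : G) * x) '' (C.P s) := ⟨h2, ⟨g, h1, rfl⟩⟩
  rw [C.hb s] at this
  exact this

lemma dichotomy (s : C.S) (g : G) : g ∈ C.P s ∨ (s : G) * g ∈ C.P s := by
  obtain ⟨ω, rfl⟩ := C.exists_word g
  induction ω using List.reverseRecOn with
  | nil => exact Or.inl (C.ha s)
  | append_singleton ω t ih =>
    rw [C.wp_append, wp_singleton]
    rcases ih with h | h
    · by_cases hg : C.wp ω * (t : G) ∈ C.P s
      · exact Or.inl hg
      · have hcc := C.hc s t (C.wp ω) h hg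
        right
        have : (s : G) * (C.wp ω * (t : G)) = C.wp ω := by
          rw [hcc]
          group
          rw [mul_assoc, C.sq t, mul_one]
        rw [this]
        exact h
    · by_cases hg : (s : G) * (C.wp ω * (t : G)) ∈ C.P s
      · exact Or.inr hg
      · left
        have hg' : ((s : G) * C.wp ω) * (t : G) ∉ C.P s := by
          rwa [mul_assoc]
        have hcc := C.hc s t ((s : G) * C.wp ω) h hg'
        have h2 : (s : G) * ((s : G) * C.wp ω) = ((s : G) * C.wp ω) * (t : G) := by
          nth_rewrite 1 [hcc]
          rw [inv_mul_cancel_right]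
        rw [C.s_cancel] at h2
        have : C.wp ω * (t : G) = (s : G) * C.wp ω := by
          conv_lhs => rw [h2]
          rw [mul_assoc ((s : G) * C.wp ω), C.sq t, mul_one]
        rw [this]
        exact h

lemma smul_mem_iff (s : C.S) (g : G) : (s : G) * g ∈ C.P s ↔ g ∉ C.P s := by
  constructor
  · intro h hg; exact C.not_both hg h
  · intro hg
    rcases C.dichotomy s g with h | h
    · exact absurd h hg
    · exact h

lemma exchange (s : C.S) (ω : List C.S) (h : C.wp ω ∉ C.P s) :
    ∃ j < ω.length, (s : G) * C.wp (ω.take j) = C.wp (ω.take (j + 1)) := by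
  induction ω using List.reverseRecOn with
  | nil => exact absurd (C.ha s) h
  | append_singleton ω t ih =>
    by_cases hω : C.wp ω ∈ C.P s
    · -- exchange at the last position
      rw [C.wp_append, wp_singleton] at h
      have hcc := C.hc s t (C.wp ω) hω h
      refine ⟨ω.length, by simp, ?_⟩
      have htake : List.take (ω.length + 1) (ω ++ [t]) = ω ++ [t] := by
        rw [show ω.length + 1 = (ω ++ [t]).length by simp]
        exact List.take_length
      rw [List.take_append_of_le_length (le_refl _), List.take_length, htake,
        C.wp_append, wp_singleton, hcc, inv_mul_cancel_right]
    · obtain ⟨j, hj, hrel⟩ := ih hω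
      refine ⟨j, ?_, ?_⟩
      · simp only [List.length_append, List.length_singleton]; omega
      · rw [List.take_append_of_le_length (by omega : j ≤ ω.length),
          List.take_append_of_le_length (by omega : j + 1 ≤ ω.length)]
        exact hrel

end PFacts


lemma deletion (s : C.S) (ω : List C.S) (h : C.wp ω ∉ C.P s) :
    ∃ j < ω.length, (s : G) * C.wp ω = C.wp (ω.eraseIdx j) := by
  obtain ⟨j, hj, hrel⟩ := C.exchange s ω h
  refine ⟨j, hj, ?_⟩
  have hsplit : ω = ω.take j ++ ω.drop j := (List.take_append_drop j ω).symm
  have hdrop : ω.drop j = ω[j] :: ω.drop (j + 1) := List.drop_eq_getElem_cons hj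
  have htake : ω.take (j + 1) = ω.take j ++ [ω[j]] := by
    rw [List.take_succ]
    simp [hj]
  calc (s : G) * C.wp ω
      = ((s : G) * C.wp (ω.take j)) * C.wp (ω.drop j) := by
        conv_lhs => rw [hsplit]
        rw [C.wp_append, mul_assoc]
    _ = C.wp (ω.take (j + 1)) * C.wp (ω.drop j) := by rw [hrel]
    _ = C.wp (ω.take j) * C.wp (ω.drop (j + 1)) := by
        rw [htake, hdrop, C.wp_append, wp_singleton, C.wp_cons]
        rw [mul_assoc, ← mul_assoc ((ω[j] : G)), C.sq, one_mul]
    _ = C.wp (ω.eraseIdx j) := by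
        rw [← C.wp_append, ← List.eraseIdx_eq_take_drop_succ]

lemma lg_lt_of_not_mem {s : C.S} {g : G} (h : g ∉ C.P s) : C.lg ((s : G) * g) < C.lg g := by
  obtain ⟨ω, hlen, hω⟩ := C.exists_reduced_word g
  obtain ⟨j, hj, hrel⟩ := C.deletion s ω (by rwa [hω])
  have h1 : C.lg ((s : G) * g) ≤ (ω.eraseIdx j).length := by
    apply C.lg_le
    rw [← hrel, hω]
  rw [List.length_eraseIdx_of_lt hj] at h1
  omega

lemma lg_gt_of_mem {s : C.S} {g : G} (h : g ∈ C.P s) : C.lg g < C.lg ((s : G) * g) := by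
  have hsg : (s : G) * g ∉ C.P s := by
    intro hmem
    exact C.not_both h hmem
  have := C.lg_lt_of_not_mem hsg
  rwa [C.s_cancel] at this

lemma mem_P_iff {s : C.S} {g : G} : g ∈ C.P s ↔ C.lg g < C.lg ((s : G) * g) := by
  constructor
  · exact C.lg_gt_of_mem
  · intro hlt
    by_contra h
    exact absurd (C.lg_lt_of_not_mem h) (by omega)

lemma not_mem_P_iff {s : C.S} {g : G} : g ∉ C.P s ↔ C.lg ((s : G) * g) < C.lg g := by
  constructor
  · exact C.lg_lt_of_not_mem
  · intro hlt h
    exact absurd (C.lg_gt_of_mem h) (by omega)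

lemma lg_smul_ne (s : C.S) (g : G) : C.lg ((s : G) * g) ≠ C.lg g := by
  rcases C.dichotomy s g with h | h
  · exact Nat.ne_of_gt (C.lg_gt_of_mem h)
  · have := C.lg_gt_of_mem h
    rw [C.s_cancel] at this
    omega

/-- A word is reduced if its length equals the length of its product. -/
def Red (ω : List C.S) : Prop := C.lg (C.wp ω) = ω.length

lemma red_nil : C.Red [] := by simp [Red]

lemma red_take {ω : List C.S} (h : C.Red ω) (j : ℕ) : C.Red (ω.take j) := by
  rcases le_or_gt ω.length j with hj | hj
  · rwa [List.take_of_length_le hj]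
  have hle : C.lg (C.wp (ω.take j)) ≤ j := by
    have := C.lg_le (g := C.wp (ω.take j)) rfl
    simpa [min_eq_left hj.le] using this
  rcases eq_or_lt_of_le hle with heq | hlt
  · rw [Red, heq]
    exact (min_eq_left hj.le ▸ (List.length_take (i := j) (l := ω))).symm
  exfalso
  obtain ⟨ρ, hρlen, hρ⟩ := C.exists_reduced_word (C.wp (ω.take j))
  have hfull : C.wp (ρ ++ ω.drop j) = C.wp ω := by
    rw [C.wp_append, hρ, ← C.wp_append, List.take_append_drop]
  have := C.lg_le hfull
  rw [Red] at h
  rw [List.length_append, hρlen, List.length_drop] at this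
  omega

lemma red_of_exists {g : G} : C.Red (Classical.choose (C.exists_word g)) → True := fun _ => trivial


/-! ### The Coxeter matrix and the lifted homomorphism -/

lemma mul_ne_one {s t : C.S} (h : s ≠ t) : (s : G) * (t : G) ≠ 1 := by
  intro heq
  apply h
  have : (s : G) = (t : G) := by
    have := congrArg (fun x => x * (t : G)) heq
    simpa [mul_assoc, C.sq t] using this
  exact Subtype.ext this

lemma orderOf_mul_symm (s t : C.S) :
    orderOf ((s : G) * (t : G)) = orderOf ((t : G) * (s : G)) := by
  rw [← orderOf_inv ((t : G) * (s : G)), mul_inv_rev, C.s_inv, C.s_inv]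

/-- The Coxeter matrix whose entries are the orders of products of pairs of generators. -/
noncomputable def Mtx : CoxeterMatrix C.S where
  M := Matrix.of fun s t => orderOf ((s : G) * (t : G))
  isSymm := by
    ext s t
    simpa [Matrix.transpose_apply] using (C.orderOf_mul_symm t s)
  diagonal := fun s => by simp [Matrix.of_apply, C.sq s]
  off_diagonal := fun s t hst => by
    simp only [Matrix.of_apply]
    intro h1
    exact C.mul_ne_one hst (orderOf_eq_one_iff.mp h1)

lemma mtx_apply (s t : C.S) : C.Mtx s t = orderOf ((s : G) * (t : G)) := rfl

/-- The Coxeter group associated to `C.Mtx`. -/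
abbrev W := C.Mtx.Group

/-- The canonical Coxeter system on `C.W`. -/
noncomputable def cs0 : CoxeterSystem C.Mtx C.W := C.Mtx.toCoxeterSystem

lemma liftable : CoxeterMatrix.IsLiftable C.Mtx (Subtype.val : C.S → G) :=
  fun _ _ => pow_orderOf_eq_one _

/-- The canonical homomorphism `C.W →* G`. -/
noncomputable def φ : C.W →* G := C.cs0.lift ⟨Subtype.val, C.liftable⟩

@[simp] lemma φ_simple (s : C.S) : C.φ (C.cs0.simple s) = (s : G) :=
  C.cs0.lift_apply_simple C.liftable s

/-- Product of a word in `C.W`. -/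
noncomputable def wpW (ω : List C.S) : C.W := C.cs0.wordProd ω

@[simp] lemma φ_wpW (ω : List C.S) : C.φ (C.wpW ω) = C.wp ω := by
  induction ω with
  | nil => simp [wpW, wp]
  | cons a ω ih =>
    rw [wpW, C.cs0.wordProd_cons, map_mul, φ_simple, ← wpW, ih, C.wp_cons]

lemma wpW_cons (a : C.S) (ω : List C.S) :
    C.wpW (a :: ω) = C.cs0.simple a * C.wpW ω := C.cs0.wordProd_cons a ω

lemma wpW_append (ω ψ : List C.S) : C.wpW (ω ++ ψ) = C.wpW ω * C.wpW ψ :=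
  C.cs0.wordProd_append ω ψ

end Cfg
end Stmt14

namespace Stmt14

open CoxeterSystem (alternatingWord)

lemma take_alternatingWord {B : Type*} (i j : B) :
    ∀ k l : ℕ, l ≤ k →
    (alternatingWord i j k).take l =
      if Even (k - l) then alternatingWord i j l else alternatingWord j i l := by
  intro k
  induction k generalizing i j with
  | zero =>
    intro l hl
    interval_cases l
    split_ifs <;> rfl
  | succ k ih =>
    intro l hl
    match l with
    | 0 => split_ifs <;> rfl
    | l + 1 =>
      rw [CoxeterSystem.alternatingWord_succ' i j k, List.take_succ_cons, ih i j l (by omega)]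
      have hkl : k + 1 - (l + 1) = k - l := by omega
      rw [hkl]
      by_cases he : Even (k - l)
      · have hp : (Even k ↔ Even l) := (Nat.even_sub (by omega : l ≤ k)).mp he
        rw [if_pos he, if_pos he, CoxeterSystem.alternatingWord_succ' i j l]
        by_cases hk : Even k
        · rw [if_pos hk, if_pos (hp.mp hk)]
        · rw [if_neg hk, if_neg (fun h => hk (hp.mpr h))]
      · have hp : (Even k ↔ ¬ Even l) := by
          rw [Nat.even_sub (by omega : l ≤ k)] at he
          tauto
        rw [if_neg he, if_neg he, CoxeterSystem.alternatingWord_succ' j i l]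
        by_cases hk : Even k
        · rw [if_pos hk, if_neg (hp.mp hk)]
        · rw [if_neg hk]
          have hev : Even l := by tauto
          rw [if_pos hev]

end Stmt14

namespace Stmt14
namespace Cfg

variable {G : Type*} [Group G] (C : Cfg G)

open CoxeterSystem (alternatingWord)

lemma wp_alternatingWord (u v : C.S) (m : ℕ) :
    C.wp (alternatingWord u v m) =
      (if Even m then 1 else (v : G)) * ((u : G) * (v : G)) ^ (m / 2) := by
  induction m with
  | zero => simp [alternatingWord]
  | succ m ih =>
    rw [CoxeterSystem.alternatingWord_succ', C.wp_cons, ih]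
    by_cases hm : Even m
    · have h₁ : ¬ Even (m + 1) := by simp [hm, parity_simps]
      have h₂ : (m + 1) / 2 = m / 2 := Nat.succ_div_of_not_dvd <| by
        rwa [← even_iff_two_dvd]
      simp [hm, h₁, h₂]
    · have h₁ : Even (m + 1) := by simp [hm, parity_simps]
      have h₂ : (m + 1) / 2 = m / 2 + 1 := Nat.succ_div_of_dvd h₁.two_dvd
      simp only [hm, h₁, h₂, if_true, if_false, one_mul]
      rw [← mul_assoc, ← pow_succ']

lemma pow_eq_one_of_alt_eq (u v : C.S) (l : ℕ)
    (h : C.wp (alternatingWord u v l) = C.wp (alternatingWord v u l)) :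
    ((u : G) * (v : G)) ^ l = 1 := by
  have hvu : (v : G) * (u : G) = ((u : G) * (v : G))⁻¹ := by
    rw [mul_inv_rev, C.s_inv, C.s_inv]
  rw [C.wp_alternatingWord, C.wp_alternatingWord, hvu] at h
  set a := (u : G) * (v : G) with ha
  rcases Nat.even_or_odd l with ⟨k, hk⟩ | ⟨k, hk⟩
  · subst hk
    have hdiv : (k + k) / 2 = k := by omega
    have he : Even (k + k) := ⟨k, rfl⟩
    rw [hdiv, if_pos he, if_pos he, one_mul, one_mul] at h
    -- h : a ^ k = (a⁻¹) ^ k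
    rw [inv_pow] at h
    calc a ^ (k + k) = a ^ k * a ^ k := by rw [pow_add]
      _ = (a ^ k)⁻¹ * a ^ k := by nth_rewrite 1 [h]; rfl
      _ = 1 := inv_mul_cancel _
  · subst hk
    have hdiv : (2 * k + 1) / 2 = k := by omega
    have hodd : ¬ Even (2 * k + 1) := by simp [parity_simps]
    rw [hdiv, if_neg hodd, if_neg hodd] at h
    -- h : v * a ^ k = u * (a⁻¹) ^ k
    have h2 := congrArg (fun x => (u : G) * x) h
    rw [C.s_cancel, ← mul_assoc] at h2
    -- h2 : (u * v) * a ^ k = (a⁻¹) ^ k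
    rw [← ha, inv_pow, ← pow_succ'] at h2
    -- h2 : a ^ (k+1) = (a ^ k)⁻¹
    calc a ^ (2 * k + 1) = a ^ (k + 1) * a ^ k := by rw [← pow_add]; ring_nf
      _ = (a ^ k)⁻¹ * a ^ k := by rw [h2]
      _ = 1 := inv_mul_cancel _



lemma lg_alt_succ_le (s t : C.S) (h : C.Mtx s t ≠ 0) :
    C.lg (C.wp (alternatingWord s t (C.Mtx s t + 1))) ≤ C.Mtx s t - 1 := by
  have hW := C.cs0.prod_alternatingWord_eq_prod_alternatingWord_sub s t (C.Mtx s t + 1)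
    (by omega)
  have hG := congrArg C.φ hW
  rw [show ∀ ω, C.cs0.wordProd ω = C.wpW ω from fun _ => rfl,
    show ∀ ω, C.cs0.wordProd ω = C.wpW ω from fun _ => rfl] at hG
  rw [C.φ_wpW, C.φ_wpW] at hG
  have hsub : C.Mtx s t * 2 - (C.Mtx s t + 1) = C.Mtx s t - 1 := by omega
  rw [hsub] at hG
  rw [hG]
  have := C.lg_le (g := C.wp (alternatingWord t s (C.Mtx s t - 1))) rfl
  simpa using this

/-! ### The exchange/deletion computation at a given index -/

lemma smul_wp_eq_wp_eraseIdx {s : C.S} {ω : List C.S} {j : ℕ} (hj : j < ω.length)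
    (hrel : (s : G) * C.wp (ω.take j) = C.wp (ω.take (j + 1))) :
    (s : G) * C.wp ω = C.wp (ω.eraseIdx j) := by
  have hsplit : ω = ω.take j ++ ω.drop j := (List.take_append_drop j ω).symm
  have hdrop : ω.drop j = ω[j] :: ω.drop (j + 1) := List.drop_eq_getElem_cons hj
  have htake : ω.take (j + 1) = ω.take j ++ [ω[j]] := by
    rw [List.take_succ]
    simp [hj]
  calc (s : G) * C.wp ω
      = ((s : G) * C.wp (ω.take j)) * C.wp (ω.drop j) := by
        conv_lhs => rw [hsplit]
        rw [C.wp_append, mul_assoc]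
    _ = C.wp (ω.take (j + 1)) * C.wp (ω.drop j) := by rw [hrel]
    _ = C.wp (ω.take j) * C.wp (ω.drop (j + 1)) := by
        rw [htake, hdrop, C.wp_append, wp_singleton, C.wp_cons]
        rw [mul_assoc, ← mul_assoc ((ω[j] : G)), C.sq, one_mul]
    _ = C.wp (ω.eraseIdx j) := by
        rw [← C.wp_append, ← List.eraseIdx_eq_take_drop_succ]

lemma red_cons_tail {a : C.S} {ω : List C.S} (h : C.Red (a :: ω)) : C.Red ω := by
  have h1 : C.lg (C.wp ω) ≤ ω.length := C.lg_le rfl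
  have h2 : C.lg (C.wp (a :: ω)) ≤ C.lg (C.wp ω) + 1 := by
    rw [C.wp_cons]
    exact C.lg_smul_le a _
  rw [Red] at h ⊢
  rw [h] at h2
  simp only [List.length_cons] at h2
  omega

lemma red_cons_not_mem {a : C.S} {ω : List C.S} (h : C.Red (a :: ω)) :
    C.wp (a :: ω) ∉ C.P a := by
  rw [C.not_mem_P_iff]
  have h1 : (a : G) * C.wp (a :: ω) = C.wp ω := by rw [C.wp_cons, C.s_cancel]
  rw [h1, h]
  have := (C.red_cons_tail h)
  rw [Red] at this
  rw [this]
  simp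

open CoxeterSystem (alternatingWord) in
/-- The ping-pong lemma: if `g` has a reduced word starting with `s` (written as
`alternatingWord t s 1 ++ rest`) and both `s` and `t` are left descents of `g`, then
`orderOf (s * t)` is finite and `g` has a reduced word starting with the full alternating
word of that length. -/
lemma pingpong (s t : C.S) (g : G) (hs : g ∉ C.P s) (ht : g ∉ C.P t)
    (hg1 : ∃ rest, C.Red (alternatingWord t s 1 ++ rest) ∧
      C.wp (alternatingWord t s 1 ++ rest) = g) :
    C.Mtx s t ≠ 0 ∧
      ∃ rest, C.Red (alternatingWord t s (C.Mtx s t) ++ rest) ∧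
        C.wp (alternatingWord t s (C.Mtx s t) ++ rest) = g := by
  suffices h : ∀ d k, k + d = C.lg g + 1 → 1 ≤ k →
      (∃ rest, C.Red (alternatingWord t s k ++ rest) ∧
        C.wp (alternatingWord t s k ++ rest) = g) →
      (C.Mtx s t ≠ 0 ∧
        ∃ rest, C.Red (alternatingWord t s (C.Mtx s t) ++ rest) ∧
          C.wp (alternatingWord t s (C.Mtx s t) ++ rest) = g) by
    have hg_ne : C.lg g ≠ 0 := by
      intro h0
      rw [C.lg_eq_zero_iff] at h0
      subst h0
      exact hs (C.ha s)
    exact h (C.lg g) 1 (by omega) le_rfl hg1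
  intro d
  induction d with
  | zero =>
    rintro k hk hk1 ⟨rest, hred, hprod⟩
    exfalso
    rw [Red, hprod] at hred
    simp only [List.length_append, CoxeterSystem.length_alternatingWord] at hred
    omega
  | succ d ih =>
    rintro k hk hk1 ⟨rest, hred, hprod⟩
    set ρ := alternatingWord t s k ++ rest with hρdef
    set v : C.S := if Even k then s else t with hvdef
    have hvP : g ∉ C.P v := by
      rw [hvdef]
      split_ifs
      · exact hs
      · exact ht
    have hgP : C.wp ρ ∉ C.P v := by rw [hprod]; exact hvP
    obtain ⟨j, hj, hrel⟩ := C.exchange v ρ hgP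
    have hρlen : ρ.length = k + rest.length := by
      simp [hρdef]
    have hlg : C.lg g = ρ.length := by rw [← hprod]; exact hred
    have hcons : v :: alternatingWord t s k = alternatingWord t s (k + 1) :=
      (CoxeterSystem.alternatingWord_succ' t s k).symm
    by_cases hjk : k ≤ j
    · -- the exchanged letter is beyond the alternating prefix: extend the prefix
      have hvg : (v : G) * g = C.wp (ρ.eraseIdx j) := by
        rw [← hprod]
        exact C.smul_wp_eq_wp_eraseIdx hj hrel
      have hrestlen : j - k < rest.length := by omega
      have herase : ρ.eraseIdx j = alternatingWord t s k ++ rest.eraseIdx (j - k) := by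
        rw [hρdef, List.eraseIdx_append_of_length_le (by simpa using hjk)]
        simp
      apply ih (k + 1) (by omega) (by omega)
      refine ⟨rest.eraseIdx (j - k), ?_, ?_⟩
      · -- reduced
        have hprod' : C.wp (alternatingWord t s (k + 1) ++ rest.eraseIdx (j - k)) = g := by
          rw [← hcons, List.cons_append, C.wp_cons, ← herase, ← hvg, C.s_cancel]
        rw [Red, hprod', hlg, hρlen]
        simp only [List.length_append, CoxeterSystem.length_alternatingWord]
        rw [List.length_eraseIdx_of_lt hrestlen]
        omega
      · rw [← hcons, List.cons_append, C.wp_cons, ← herase, ← hvg, C.s_cancel]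
    · push_neg at hjk
      -- the exchanged letter is inside the alternating prefix: the dihedral order is exactly k
      have htj : ρ.take j = (alternatingWord t s k).take j := by
        rw [hρdef]
        exact List.take_append_of_le_length (by simp; omega)
      have htj1 : ρ.take (j + 1) = (alternatingWord t s k).take (j + 1) := by
        rw [hρdef]
        exact List.take_append_of_le_length (by simp; omega)
      rw [take_alternatingWord t s k j (by omega)] at htj
      rw [take_alternatingWord t s k (j + 1) (by omega)] at htj1
      have hsucc : k - j = (k - (j + 1)) + 1 := by omega
      have hdvd : C.Mtx s t ∣ j + 1 := by
        by_cases hev : Even (k - j)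
        · have hev1 : ¬ Even (k - (j + 1)) := by
            rw [hsucc, Nat.even_add_one] at hev
            exact fun h => hev h
          rw [if_pos hev] at htj
          rw [if_neg hev1] at htj1
          have hkj : Even k ↔ Even j := (Nat.even_sub (le_of_lt hjk)).mp hev
          have hvj : v = (if Even j then s else t) := by
            rw [hvdef]
            by_cases h : Even k
            · rw [if_pos h, if_pos (hkj.mp h)]
            · rw [if_neg h, if_neg (fun hh => h (hkj.mpr hh))]
          have hreln : C.wp (alternatingWord t s (j + 1)) =
              C.wp (alternatingWord s t (j + 1)) := by
            rw [CoxeterSystem.alternatingWord_succ' t s j, ← hvj, C.wp_cons, ← htj, hrel, htj1]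
          have hpow := C.pow_eq_one_of_alt_eq t s (j + 1) hreln
          rw [C.mtx_apply, C.orderOf_mul_symm]
          exact orderOf_dvd_of_pow_eq_one hpow
        · have hev1 : Even (k - (j + 1)) := by
            rw [hsucc, Nat.even_add_one] at hev
            exact not_not.mp hev
          rw [if_neg hev] at htj
          rw [if_pos hev1] at htj1
          have hkj : ¬ (Even k ↔ Even j) := fun h => hev ((Nat.even_sub (le_of_lt hjk)).mpr h)
          have hvj : v = (if Even j then t else s) := by
            rw [hvdef]
            by_cases h : Even k
            · rw [if_pos h, if_neg (fun hh => hkj (iff_of_true h hh))]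
            · rw [if_neg h]
              have : Even j := by
                by_contra hj'
                exact hkj (iff_of_false h hj')
              rw [if_pos this]
          have hreln : C.wp (alternatingWord s t (j + 1)) =
              C.wp (alternatingWord t s (j + 1)) := by
            rw [CoxeterSystem.alternatingWord_succ' s t j, ← hvj, C.wp_cons, ← htj, hrel, htj1]
          have hpow := C.pow_eq_one_of_alt_eq s t (j + 1) hreln
          rw [C.mtx_apply]
          exact orderOf_dvd_of_pow_eq_one hpow
      have hm0 : C.Mtx s t ≠ 0 := by
        intro h0
        rw [h0] at hdvd
        exact Nat.succ_ne_zero j (Nat.eq_zero_of_zero_dvd hdvd)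
      have hmle : C.Mtx s t ≤ j + 1 := Nat.le_of_dvd (by omega) hdvd
      have hmk : C.Mtx s t = k := by
        by_contra hne
        have hlt : C.Mtx s t + 1 ≤ k := by omega
        have htm : ρ.take (C.Mtx s t + 1) = (alternatingWord t s k).take (C.Mtx s t + 1) := by
          rw [hρdef]
          exact List.take_append_of_le_length (by simp; omega)
        rw [take_alternatingWord t s k (C.Mtx s t + 1) hlt] at htm
        have hredm : C.Red (ρ.take (C.Mtx s t + 1)) := C.red_take hred _
        have hlenm : (ρ.take (C.Mtx s t + 1)).length = C.Mtx s t + 1 := by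
          rw [List.length_take]
          simp only [hρlen]
          omega
        have hlgm : C.lg (C.wp (ρ.take (C.Mtx s t + 1))) = C.Mtx s t + 1 := by
          rw [Red] at hredm
          exact hredm.trans hlenm
        have hcontra : C.lg (C.wp (ρ.take (C.Mtx s t + 1))) ≤ C.Mtx s t - 1 := by
          rw [htm]
          split_ifs
          · have hsym : C.Mtx t s = C.Mtx s t := C.Mtx.symmetric t s
            have hle := C.lg_alt_succ_le t s (by rw [hsym]; exact hm0)
            rwa [hsym] at hle
          · exact C.lg_alt_succ_le s t hm0
        omega
      refine ⟨hm0, ⟨rest, ?_, ?_⟩⟩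
      · rw [hmk]; exact hred
      · rw [hmk]; exact hprod


open CoxeterSystem (alternatingWord) in
/-- Matsumoto-type theorem: two reduced words for the same element of `G` have the same
image in the Coxeter group `C.W`. -/
theorem matsumoto : ∀ n : ℕ, ∀ ω ψ : List C.S, C.Red ω → C.Red ψ → C.wp ω = C.wp ψ →
    ω.length = n → C.wpW ω = C.wpW ψ := by
  intro n
  induction n using Nat.strong_induction_on with
  | _ n IH =>
    intro ω ψ hω hψ heq hlen
    -- the "same head" gluing argument
    have glue : ∀ (x : C.S) (α β : List C.S), C.Red (x :: α) → C.Red (x :: β) →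
        C.wp (x :: α) = C.wp (x :: β) → (x :: α).length = n →
        C.wpW (x :: α) = C.wpW (x :: β) := by
      intro x α β hα hβ hpr hl
      have hαl : α.length + 1 = n := by simpa using hl
      have htail : C.wp α = C.wp β := by
        have h1 : C.wp α = (x : G) * C.wp (x :: α) := by rw [C.wp_cons, C.s_cancel]
        have h2 : C.wp β = (x : G) * C.wp (x :: β) := by rw [C.wp_cons, C.s_cancel]
        rw [h1, h2, hpr]
      have := IH α.length (by omega) α β (C.red_cons_tail hα) (C.red_cons_tail hβ) htail rfl
      rw [C.wpW_cons, C.wpW_cons, this]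
    match ω, ψ with
    | [], ψ =>
      have h1 : C.wp ψ = 1 := by rw [← heq, wp_nil]
      have h2 : ψ.length = 0 := by
        rw [Red, h1, C.lg_one] at hψ
        omega
      rw [List.length_eq_zero_iff.mp h2]
    | a :: ω', [] =>
      exfalso
      have h1 : C.wp (a :: ω') = 1 := by rw [heq, wp_nil]
      rw [Red, h1, C.lg_one] at hω
      simp at hω
    | a :: ω', b :: ψ' =>
      by_cases hab : a = b
      · subst hab
        exact glue a ω' ψ' hω hψ heq hlen
      · -- two distinct heads: use ping-pong and the braid relation
        set g := C.wp (a :: ω') with hgdef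
        have hn : C.lg g = n := by rw [← hlen]; exact hω
        have hga : g ∉ C.P a := C.red_cons_not_mem hω
        have hgb : g ∉ C.P b := by
          rw [heq]
          exact C.red_cons_not_mem hψ
        have halt1 : alternatingWord b a 1 = [a] := rfl
        obtain ⟨hm0, rest, hredr, hprodr⟩ := C.pingpong a b g hga hgb
          ⟨ω', by rw [halt1]; exact hω, by rw [halt1]; exact hgdef.symm⟩
        set m := C.Mtx a b with hmdef
        have hm1 : m ≠ 1 := C.Mtx.off_diagonal a b hab
        obtain ⟨m1, hm1eq⟩ : ∃ m1, m = m1 + 1 := ⟨m - 1, by omega⟩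
        -- the two braid-related reduced words for g
        have hsym : C.Mtx b a = m := C.Mtx.symmetric b a
        have hW : C.wpW (alternatingWord b a m ++ rest) =
            C.wpW (alternatingWord a b m ++ rest) := by
          rw [C.wpW_append, C.wpW_append]
          have hbr := C.cs0.wordProd_braidWord_eq b a
          simp only [CoxeterSystem.braidWord] at hbr
          rw [hsym, ← hmdef] at hbr
          rw [show C.cs0.wordProd (alternatingWord b a m) = C.wpW (alternatingWord b a m)
            from rfl, show C.cs0.wordProd (alternatingWord a b m) = C.wpW (alternatingWord a b m)
            from rfl] at hbr
          rw [hbr]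
        have hG : C.wp (alternatingWord a b m ++ rest) = g := by
          have h1 := congrArg C.φ hW
          rw [C.φ_wpW, C.φ_wpW] at h1
          rw [← h1, hprodr]
        have hlenba : (alternatingWord b a m ++ rest).length = n := by
          rw [← hredr, hprodr, hn]
        have hlen_ab : (alternatingWord a b m ++ rest).length = n := by
          simp only [List.length_append, CoxeterSystem.length_alternatingWord] at hlenba ⊢
          omega
        have hred' : C.Red (alternatingWord a b m ++ rest) := by
          rw [Red, hG, hn, hlen_ab]
        have hlenb : (b :: ψ').length = n := by
          rw [← hψ, ← heq, hn]
        -- write both words in cons form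
        have hconsba : alternatingWord b a m ++ rest =
            (if Even m1 then a else b) :: (alternatingWord b a m1 ++ rest) := by
          rw [hm1eq, CoxeterSystem.alternatingWord_succ' b a m1, List.cons_append]
        have hconsab : alternatingWord a b m ++ rest =
            (if Even m1 then b else a) :: (alternatingWord a b m1 ++ rest) := by
          rw [hm1eq, CoxeterSystem.alternatingWord_succ' a b m1, List.cons_append]
        by_cases hpar : Even m1
        · rw [if_pos hpar] at hconsba hconsab
          have e1 : C.wpW (a :: ω') = C.wpW (alternatingWord b a m ++ rest) := by
            rw [hconsba]
            refine glue a ω' _ hω ?_ ?_ hlen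
            · rw [hconsba] at hredr; exact hredr
            · rw [← hconsba, hprodr, hgdef]
          have e2 : C.wpW (b :: ψ') = C.wpW (alternatingWord a b m ++ rest) := by
            rw [hconsab]
            refine glue b ψ' _ hψ ?_ ?_ hlenb
            · rw [hconsab] at hred'; exact hred'
            · rw [← hconsab, hG, heq]
          rw [e1, e2]
          exact hW
        · rw [if_neg hpar] at hconsba hconsab
          have e1 : C.wpW (a :: ω') = C.wpW (alternatingWord a b m ++ rest) := by
            rw [hconsab]
            refine glue a ω' _ hω ?_ ?_ hlen
            · rw [hconsab] at hred'; exact hred'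
            · rw [← hconsab, hG, hgdef]
          have e2 : C.wpW (b :: ψ') = C.wpW (alternatingWord b a m ++ rest) := by
            rw [hconsba]
            refine glue b ψ' _ hψ ?_ ?_ hlenb
            · rw [hconsba] at hredr; exact hredr
            · rw [← hconsba, hprodr, heq]
          rw [e1, e2]
          exact hW.symm


/-- Every word can be replaced by a reduced word with the same image in `G` and in `C.W`. -/
theorem reduce : ∀ n : ℕ, ∀ υ : List C.S, υ.length = n →
    ∃ ρ, C.Red ρ ∧ C.wp ρ = C.wp υ ∧ C.wpW ρ = C.wpW υ := by
  intro n
  induction n using Nat.strong_induction_on with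
  | _ n IH =>
    intro υ hlen
    by_cases hred : C.Red υ
    · exact ⟨υ, hred, rfl, rfl⟩
    · classical
      have hone : 1 ≤ υ.length := by
        rcases υ with _ | ⟨x, υ⟩
        · exact absurd C.red_nil hred
        · simp
      have hex : ∃ j, C.Red (υ.drop j) := ⟨υ.length, by rw [List.drop_length]; exact C.red_nil⟩
      set j0 := Nat.find hex with hj0def
      have hj0red : C.Red (υ.drop j0) := Nat.find_spec hex
      have hj0pos : 1 ≤ j0 := by
        by_contra h
        push_neg at h
        interval_cases j0
        · rw [List.drop_zero] at hj0red
          exact hred hj0red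
      set j := j0 - 1 with hjdef
      have hjlt : j < j0 := by omega
      have hnotred : ¬ C.Red (υ.drop j) := Nat.find_min hex hjlt
      have hj0le : j0 ≤ υ.length := Nat.find_min' hex (by rw [List.drop_length]; exact C.red_nil)
      have hjlen : j < υ.length := by omega
      have hj1 : j + 1 = j0 := by omega
      have hdropcons : υ.drop j = υ[j] :: υ.drop (j + 1) := List.drop_eq_getElem_cons hjlen
      set u := υ[j] with hudef
      set D := υ.drop (j + 1) with hDdef
      have hDred : C.Red D := by rw [hDdef, hj1]; exact hj0red
      have hDlen : D.length = υ.length - (j + 1) := by rw [hDdef, List.length_drop]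
      have hDlg : C.lg (C.wp D) = υ.length - (j + 1) := by
        rw [hDred, hDlen]
      have hlt : C.lg ((u : G) * C.wp D) < C.lg (C.wp D) := by
        have hne1 : C.lg ((u : G) * C.wp D) ≠ υ.length - j := by
          intro hcon
          apply hnotred
          rw [Red, hdropcons, C.wp_cons, hcon]
          simp only [List.length_cons, hDlen]
          omega
        have hle : C.lg ((u : G) * C.wp D) ≤ C.lg (C.wp D) + 1 := C.lg_smul_le u _
        have hne2 : C.lg ((u : G) * C.wp D) ≠ C.lg (C.wp D) := C.lg_smul_ne u _
        omega
      have hmem : C.wp D ∉ C.P u := by rw [C.not_mem_P_iff]; exact hlt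
      obtain ⟨i, hi, hrel⟩ := C.exchange u D hmem
      have hyred : C.Red (D.take (i + 1)) := C.red_take hDred _
      have hxword : C.wp (u :: D.take i) = C.wp (D.take (i + 1)) := by rw [C.wp_cons, hrel]
      have hxlen : (u :: D.take i).length = i + 1 := by
        simp only [List.length_cons, List.length_take]
        omega
      have hylen : (D.take (i + 1)).length = i + 1 := by
        simp only [List.length_take]
        omega
      have hxred : C.Red (u :: D.take i) := by
        rw [Red, hxword, hxlen, hyred, hylen]
      have hWeq := C.matsumoto (i + 1) (u :: D.take i) (D.take (i + 1)) hxred hyred hxword hxlen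
      set υ' := υ.take j ++ (D.take i ++ D.drop (i + 1)) with hυ'def
      have hυ'len : υ'.length = υ.length - 2 := by
        simp only [hυ'def, List.length_append, List.length_take, List.length_drop]
        omega
      have hDsplit : C.wp D = (u : G) * (C.wp (D.take i) * C.wp (D.drop (i + 1))) := by
        conv_lhs => rw [← List.take_append_drop (i + 1) D]
        rw [C.wp_append, ← hrel, mul_assoc]
      have hRHS : C.wp υ = C.wp (υ.take j) * ((u : G) * C.wp D) := by
        conv_lhs => rw [← List.take_append_drop j υ]
        rw [C.wp_append, hdropcons, C.wp_cons]
      have hLHS : C.wp υ' = C.wp (υ.take j) * (C.wp (D.take i) * C.wp (D.drop (i + 1))) := by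
        rw [hυ'def, C.wp_append, C.wp_append]
      have hwp' : C.wp υ' = C.wp υ := by
        rw [hLHS, hRHS, hDsplit, C.s_cancel]
      have hWD : C.wpW D = C.cs0.simple u * (C.wpW (D.take i) * C.wpW (D.drop (i + 1))) := by
        conv_lhs => rw [← List.take_append_drop (i + 1) D]
        rw [C.wpW_append, ← hWeq, C.wpW_cons, mul_assoc]
      have hRHSW : C.wpW υ = C.wpW (υ.take j) * (C.cs0.simple u * C.wpW D) := by
        conv_lhs => rw [← List.take_append_drop j υ]
        rw [C.wpW_append, hdropcons, C.wpW_cons]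
      have hLHSW : C.wpW υ' =
          C.wpW (υ.take j) * (C.wpW (D.take i) * C.wpW (D.drop (i + 1))) := by
        rw [hυ'def, C.wpW_append, C.wpW_append]
      have hwpW' : C.wpW υ' = C.wpW υ := by
        rw [hLHSW, hRHSW, hWD]
        rw [← mul_assoc (C.cs0.simple u), C.cs0.simple_mul_simple_self, one_mul]
      obtain ⟨ρ, h1, h2, h3⟩ := IH υ'.length (by omega) υ' rfl
      exact ⟨ρ, h1, h2.trans hwp', h3.trans hwpW'⟩

theorem φ_bijective : Function.Bijective C.φ := by
  constructor
  · intro x y hxy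
    obtain ⟨ω, rfl⟩ := C.cs0.wordProd_surjective x
    obtain ⟨ψ, rfl⟩ := C.cs0.wordProd_surjective y
    change C.wpW ω = C.wpW ψ
    change C.φ (C.wpW ω) = C.φ (C.wpW ψ) at hxy
    have heq : C.wp ω = C.wp ψ := by rw [← C.φ_wpW, ← C.φ_wpW]; exact hxy
    obtain ⟨ρ, hρred, hρwp, hρW⟩ := C.reduce ω.length ω rfl
    obtain ⟨ρ', h2red, h2wp, h2W⟩ := C.reduce ψ.length ψ rfl
    have hpr : C.wp ρ = C.wp ρ' := by rw [hρwp, h2wp, heq]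
    have := C.matsumoto ρ.length ρ ρ' hρred h2red hpr rfl
    rw [← hρW, ← h2W]
    exact this
  · intro g
    obtain ⟨ω, hω⟩ := C.exists_word g
    exact ⟨C.wpW ω, by rw [C.φ_wpW, hω]⟩

/-- The isomorphism between the abstract Coxeter group and `G`. -/
noncomputable def equiv : C.W ≃* G := MulEquiv.ofBijective C.φ C.φ_bijective

/-- The Coxeter system on `G` itself. -/
noncomputable def csG : CoxeterSystem C.Mtx G := C.cs0.map C.equiv

lemma csG_simple (s : C.S) : C.csG.simple s = (s : G) := by
  rw [csG, CoxeterSystem.map_simple]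
  exact C.φ_simple s

lemma csG_wordProd (ω : List C.S) : C.csG.wordProd ω = C.wp ω := by
  induction ω with
  | nil => simp [CoxeterSystem.wordProd_nil]
  | cons a ω ih => rw [C.csG.wordProd_cons, ih, C.wp_cons, C.csG_simple]

lemma csG_length (g : G) : C.csG.length g = C.lg g := by
  apply le_antisymm
  · obtain ⟨ω, hl, hω⟩ := C.exists_reduced_word g
    have := C.csG.length_wordProd_le ω
    rw [C.csG_wordProd, hω] at this
    omega
  · obtain ⟨ω, hl, hω⟩ := C.csG.exists_reduced_word g
    have := C.lg_le (g := g) (ω := ω) (by rw [← C.csG_wordProd]; exact hω.symm)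
    have hl' := hl.eq
    rw [← hω] at hl'
    omega

end Cfg
end Stmt14

/-- **Bourbaki's criterion.** Let `G` be a group generated by a set `S` of
involutions and `(P s)_{s ∈ S}` a family of subsets of `G` with: (a) `e ∈ P s`;
(b) `P s ∩ s • P s = ∅`; (c) if `g ∈ P s` and `g s' ∉ P s` then `s = g s' g⁻¹`.
Then `(G, S)` is a Coxeter system — there is a Coxeter matrix `Mat` over `S`, with entries
the orders of the products `s s'`, and a Coxeter system structure on `G` whose simple
reflections are exactly the elements of `S` — and `P s = {g | ℓ(s g) > ℓ(g)}` for the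
associated length function. -/
theorem stmt_14 {G : Type*} [Group G] (S : Set G)
    (hinvol : ∀ s ∈ S, s ≠ 1 ∧ s * s = 1)
    (hgen : Subgroup.closure S = ⊤)
    (P : S → Set G)
    (ha : ∀ s : S, (1 : G) ∈ P s)
    (hb : ∀ s : S, P s ∩ (fun g => (s : G) * g) '' (P s) = ∅)
    (hc : ∀ s s' : S, ∀ g : G, g ∈ P s → g * (s' : G) ∉ P s →
      (s : G) = g * (s' : G) * g⁻¹) :
    ∃ (Mat : CoxeterMatrix S) (cs : CoxeterSystem Mat G),
      (∀ s : S, cs.simple s = (s : G)) ∧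
      (∀ s t : S, Mat.M s t = orderOf ((s : G) * (t : G))) ∧
      (∀ s : S, P s = {g : G | cs.length ((s : G) * g) > cs.length g}) := by
  set C : Stmt14.Cfg G := ⟨S, P, hinvol, hgen, ha, hb, hc⟩ with hC
  refine ⟨C.Mtx, C.csG, ?_, ?_, ?_⟩
  · intro s
    exact C.csG_simple s
  · intro s t
    rfl
  · intro s
    ext g
    simp only [Set.mem_setOf_eq, gt_iff_lt, C.csG_length]
    exact C.mem_P_iff
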